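/- arXiv:1809.08263 — 7 statements merged into one kernel-verified Lean document; each statement's English description precedes it below -/
import Mathlib

section
/- Let T ≥ 2 and let k satisfy ⌈T/2⌉ ≤ k. For every matrix A ∈ F_2^{T×m} there exists a matrix P ∈ F_2^{(T+1)×T} such that for every row vector d ∈ F_2^T there exists a row vector d' ∈ F_2^{T+1} with Hamming weight at most k satisfying d'·(P·A) = d·A. In particular, every vector in the row span of A is a sum of at most k rows of the (T+1)-row matrix P·A. -/
/-!
Take for `P` the identity matrix with an all-ones row appended, so that the rows of `P * A` are
the rows of `A` together with their sum. A vector `d · A` is then a sum of `wt d` rows of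
`P * A`, and also, over `F_2`, the sum of all rows of `A` plus the complementary `T - wt d` rows,
i.e. a sum of `T - wt d + 1` rows of `P * A`. The smaller of the two weights is at most `⌈T/2⌉`.
-/

open Matrix

def identitySnocOnes (R : Type*) [Zero R] [One R] (T : ℕ) : Matrix (Fin (T + 1)) (Fin T) R :=
  Fin.snoc (1 : Matrix (Fin T) (Fin T) R) 1

@[simp]
theorem identitySnocOnes_castSucc (R : Type*) [Zero R] [One R] {T : ℕ} (i : Fin T) :
    identitySnocOnes R T i.castSucc = (1 : Matrix (Fin T) (Fin T) R) i :=
  Fin.snoc_castSucc ..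

@[simp]
theorem identitySnocOnes_last (R : Type*) [Zero R] [One R] (T : ℕ) :
    identitySnocOnes R T (Fin.last T) = 1 :=
  Fin.snoc_last ..

theorem vecMul_identitySnocOnes {R : Type*} [Semiring R] {T : ℕ} (v : Fin T → R) (c : R) :
    (Fin.snoc v c : Fin (T + 1) → R) ᵥ* identitySnocOnes R T = v + c • 1 := by
  rw [vecMul_eq_sum, Fin.sum_univ_castSucc]
  simp [← vecMul_eq_sum]

theorem hammingNorm_snoc {R : Type*} [Zero R] [DecidableEq R] {T : ℕ} (v : Fin T → R) (c : R) :
    hammingNorm (Fin.snoc v c : Fin (T + 1) → R) = hammingNorm v + if c = 0 then 0 else 1 := by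
  simp only [hammingNorm, Finset.card_filter, Fin.sum_univ_castSucc, Fin.snoc_castSucc,
    Fin.snoc_last]
  split_ifs <;> simp_all

theorem hammingNorm_add_one_add_hammingNorm {ι : Type*} [Fintype ι] (v : ι → ZMod 2) :
    hammingNorm (v + 1) + hammingNorm v = Fintype.card ι := by
  have hcompl (x : ZMod 2) : x + 1 ≠ 0 ↔ ¬x ≠ 0 := by revert x; decide
  simp only [hammingNorm, Pi.add_apply, Pi.one_apply, hcompl]
  rw [add_comm, Finset.card_filter_add_card_filter_not, Finset.card_univ]

theorem exists_hammingNorm_le_vecMul_identitySnocOnes_eq {T : ℕ} (d : Fin T → ZMod 2) :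
    ∃ d' : Fin (T + 1) → ZMod 2,
      hammingNorm d' ≤ (T + 1) / 2 ∧ d' ᵥ* identitySnocOnes (ZMod 2) T = d := by
  by_cases hd : hammingNorm d ≤ (T + 1) / 2
  · exact ⟨Fin.snoc d 0, by simpa [hammingNorm_snoc], by simp [vecMul_identitySnocOnes]⟩
  · refine ⟨Fin.snoc (d + 1) 1, ?_, ?_⟩
    · have hcompl := hammingNorm_add_one_add_hammingNorm d
      rw [Fintype.card_fin] at hcompl
      rw [hammingNorm_snoc, if_neg one_ne_zero]
      omega
    · rw [vecMul_identitySnocOnes, one_smul, add_assoc, ZModModule.add_self, add_zero]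

theorem stmt4_general (T m k : ℕ) (hk : (T + 1) / 2 ≤ k)
    (A : Matrix (Fin T) (Fin m) (ZMod 2)) :
    ∃ P : Matrix (Fin (T + 1)) (Fin T) (ZMod 2),
      ∀ d : Fin T → ZMod 2, ∃ d' : Fin (T + 1) → ZMod 2,
        (Finset.univ.filter fun i => d' i ≠ 0).card ≤ k ∧
        Matrix.vecMul d' (P * A) = Matrix.vecMul d A := by
  refine ⟨identitySnocOnes (ZMod 2) T, fun d => ?_⟩
  obtain ⟨d', hweight, hd'⟩ := exists_hammingNorm_le_vecMul_identitySnocOnes_eq d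
  exact ⟨d', hweight.trans hk, by rw [← vecMul_vecMul, hd']⟩

/-- For `T ≥ 2` and `⌈T/2⌉ ≤ k`: for every matrix `A ∈ F_2^{T×m}` there is a matrix
`P ∈ F_2^{(T+1)×T}` such that every `d ∈ F_2^T` admits `d' ∈ F_2^{T+1}` of Hamming
weight at most `k` with `d'·(P·A) = d·A`. -/
theorem stmt4 (T m k : ℕ) (hT : 2 ≤ T) (hk : (T + 1) / 2 ≤ k)
    (A : Matrix (Fin T) (Fin m) (ZMod 2)) :
    ∃ P : Matrix (Fin (T + 1)) (Fin T) (ZMod 2),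
      ∀ d : Fin T → ZMod 2, ∃ d' : Fin (T + 1) → ZMod 2,
        (Finset.univ.filter fun i => d' i ≠ 0).card ≤ k ∧
        Matrix.vecMul d' (P * A) = Matrix.vecMul d A :=
  stmt4_general T m k hk A
end

section
/- Let T, k be natural numbers with 1 ≤ k ≤ T. Set Q = ⌊T / ⌈T/k⌉⌋ and T_rem = T − Q·⌈T/k⌉. Then Q·(2^{⌈T/k⌉} − 1) + 2^{T_rem} − 1 ≤ k · 2^{⌈T/k⌉}. -/
/-!
With `c = ⌈T/k⌉` we have `T ≤ k c`, so `Q = ⌊T/c⌋ ≤ k` and `T_rem = T mod c`. If `T_rem = 0` the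
left side is `Q (2^c - 1) ≤ k 2^c`. Otherwise `Q c < T ≤ k c` forces `Q + 1 ≤ k`, and
`2^{T_rem} ≤ 2^c` bounds the left side by `(Q + 1) 2^c`.
-/

theorem Nat.div_mul_two_pow_sub_one_add_two_pow_mod_le {T c k : ℕ} (hT : T ≤ k * c) :
    T / c * (2 ^ c - 1) + 2 ^ (T % c) - 1 ≤ k * 2 ^ c := by
  have hQk : T / c ≤ k := Nat.div_le_of_le_mul (by rwa [Nat.mul_comm])
  have hdrop : T / c * (2 ^ c - 1) ≤ T / c * 2 ^ c := Nat.mul_le_mul_left _ (Nat.sub_le _ _)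
  rcases Nat.eq_zero_or_pos (T % c) with hr | hr
  · rw [hr, pow_zero, Nat.add_sub_cancel]
    exact hdrop.trans (Nat.mul_le_mul_right _ hQk)
  · have hc : 0 < c := Nat.pos_of_ne_zero fun hc ↦ by simp_all
    have hQk' : T / c < k := by
      refine Nat.lt_of_mul_lt_mul_right (a := c) ?_
      have := Nat.div_add_mod' T c
      omega
    have hpow : 2 ^ (T % c) ≤ 2 ^ c := Nat.pow_le_pow_right two_pos (Nat.mod_lt T hc).le
    calc T / c * (2 ^ c - 1) + 2 ^ (T % c) - 1 ≤ T / c * 2 ^ c + 2 ^ c :=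
          (Nat.sub_le _ _).trans (Nat.add_le_add hdrop hpow)
      _ = (T / c + 1) * 2 ^ c := by ring
      _ ≤ k * 2 ^ c := Nat.mul_le_mul_right _ hQk'

theorem stmt6_general (T k : ℕ) (hk1 : 1 ≤ k) :
    T / ((T + k - 1) / k) * (2 ^ ((T + k - 1) / k) - 1) +
        2 ^ (T - T / ((T + k - 1) / k) * ((T + k - 1) / k)) - 1 ≤
      k * 2 ^ ((T + k - 1) / k) := by
  rw [← Nat.ceilDiv_eq_add_pred_div, ← Nat.mod_eq_sub_div_mul]
  exact Nat.div_mul_two_pow_sub_one_add_two_pow_mod_le ((gc_mul_ceilDiv hk1).le_u_l T)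

/-- For `1 ≤ k ≤ T`, with `c = ⌈T/k⌉`, `Q = ⌊T/c⌋` and `T_rem = T − Q·c`, we have
`Q·(2^c − 1) + 2^{T_rem} − 1 ≤ k · 2^c`. -/
theorem stmt6 (T k : ℕ) (hk1 : 1 ≤ k) (hkT : k ≤ T) :
    T / ((T + k - 1) / k) * (2 ^ ((T + k - 1) / k) - 1) +
        2 ^ (T - T / ((T + k - 1) / k) * ((T + k - 1) / k)) - 1 ≤
      k * 2 ^ ((T + k - 1) / k) :=
  stmt6_general T k hk1
end

section
/- Let T ≥ 2 and let k satisfy 1 ≤ k < T. If S is a finite set of vectors in F_2^T such that every nonzero vector v ∈ F_2^T is a sum of at most k elements of S, then |S| ≥ T + 1. -/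
/-!
If every nonzero vector of `F_2^T` is a sum of elements of `S`, then `S` spans, so `|S| ≥ T`.
If `|S| = T`, then `S` is a basis, so the sum of all of `S` is nonzero and its only
representation as a sum of a subset of `S` is the whole of `S`, which has `T > k` elements.
-/

open Finset Module Submodule

section

variable {R M : Type*}

theorem Submodule.span_finset_eq_top_of_forall_ne_zero [Semiring R] [AddCommMonoid M]
    [Module R M] {S : Finset M} (hS : ∀ v : M, v ≠ 0 → ∃ S' ⊆ S, v = ∑ s ∈ S', s) :
    span R (S : Set M) = ⊤ := by
  refine eq_top_iff.mpr fun v _ => ?_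
  rcases eq_or_ne v 0 with rfl | hv
  · exact zero_mem _
  obtain ⟨S', hS'S, rfl⟩ := hS v hv
  exact sum_mem fun s hs => subset_span (hS'S hs)

variable [Ring R] [Nontrivial R] [AddCommGroup M] [Module R M]

theorem LinearIndepOn.eq_empty_of_subset_of_sum_eq_zero {S A : Finset M}
    (hS : LinearIndepOn R id (S : Set M)) (hA : A ⊆ S) (hsum : ∑ s ∈ A, s = 0) : A = ∅ := by
  have hind := linearIndepOn_finset_iff.mp (hS.mono (coe_subset.mpr hA)) 1
  simp only [Pi.one_apply, one_smul, id] at hind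
  exact eq_empty_of_forall_notMem fun s hs => one_ne_zero (hind hsum s hs)

theorem LinearIndepOn.eq_of_subset_of_sum_eq {S A : Finset M}
    (hS : LinearIndepOn R id (S : Set M)) (hA : A ⊆ S) (hsum : ∑ s ∈ A, s = ∑ s ∈ S, s) :
    A = S := by
  classical
  have hdiff : ∑ s ∈ S \ A, s = 0 := by
    simpa [hsum] using sum_sdiff hA (f := id)
  have hempty := hS.eq_empty_of_subset_of_sum_eq_zero sdiff_subset hdiff
  exact hA.antisymm (sdiff_eq_empty_iff_subset.mp hempty)

end

section

variable {K V : Type*} [DivisionRing K] [AddCommGroup V] [Module K V]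

theorem finrank_le_card_of_span_finset_eq_top {S : Finset V} (hS : span K (S : Set V) = ⊤) :
    finrank K V ≤ S.card := by
  have := finrank_span_finset_le_card (R := K) S
  rwa [Set.finrank, hS, finrank_top] at this

theorem linearIndepOn_of_span_finset_eq_top_of_card_le {S : Finset V}
    (hS : span K (S : Set V) = ⊤) (hcard : S.card ≤ finrank K V) :
    LinearIndepOn K id (S : Set V) :=
  linearIndependent_of_top_le_span_of_card_le_finrank (by simpa using hS.ge) (by simpa using hcard)

end

theorem stmt8_general (T k : ℕ) (hkT : k < T)
    (S : Finset (Fin T → ZMod 2))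
    (hS : ∀ v : Fin T → ZMod 2, v ≠ 0 →
      ∃ S' ⊆ S, S'.Nonempty ∧ S'.card ≤ k ∧ v = ∑ s ∈ S', s) :
    T + 1 ≤ S.card := by
  by_contra! hcard
  have hspan : span (ZMod 2) (S : Set (Fin T → ZMod 2)) = ⊤ :=
    span_finset_eq_top_of_forall_ne_zero fun v hv =>
      let ⟨S', hS'S, _, _, hv'⟩ := hS v hv; ⟨S', hS'S, hv'⟩
  have hT : T ≤ S.card := by simpa using finrank_le_card_of_span_finset_eq_top hspan
  have hind : LinearIndepOn (ZMod 2) id (S : Set (Fin T → ZMod 2)) :=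
    linearIndepOn_of_span_finset_eq_top_of_card_le hspan (by simpa using Nat.le_of_lt_succ hcard)
  have hsum : ∑ s ∈ S, s ≠ 0 := fun h0 => by
    have hempty := hind.eq_empty_of_subset_of_sum_eq_zero subset_rfl h0
    rw [hempty, card_empty] at hT
    omega
  obtain ⟨S', hS'S, -, hS'k, hS'sum⟩ := hS _ hsum
  rw [hind.eq_of_subset_of_sum_eq hS'S hS'sum.symm] at hS'k
  omega

/-- For `T ≥ 2` and `1 ≤ k < T`: if every nonzero `v ∈ F_2^T` is a sum of at most
`k` elements of a finite set `S`, then `|S| ≥ T + 1`. -/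
theorem stmt8 (T k : ℕ) (hT : 2 ≤ T) (hk1 : 1 ≤ k) (hkT : k < T)
    (S : Finset (Fin T → ZMod 2))
    (hS : ∀ v : Fin T → ZMod 2, v ≠ 0 →
      ∃ S' ⊆ S, S'.Nonempty ∧ S'.card ≤ k ∧ v = ∑ s ∈ S', s) :
    T + 1 ≤ S.card :=
  stmt8_general T k hkT S hS
end

section
/- Let T ≥ 2 and let k satisfy ⌈T/2⌉ ≤ k < T. Then the minimum cardinality of a finite set S ⊆ F_2^T with the property that every nonzero vector v ∈ F_2^T is a sum of at most k elements of S equals exactly T + 1. -/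
open Finset Module

def IsSubsetSumCover {V : Type*} [AddCommMonoid V] (k : ℕ) (S : Finset V) : Prop :=
  ∀ v : V, v ≠ 0 → ∃ S' ⊆ S, S'.Nonempty ∧ S'.card ≤ k ∧ v = ∑ s ∈ S', s

theorem LinearIndepOn.sum_id_ne_zero {R V : Type*} [Ring R] [Nontrivial R] [AddCommGroup V]
    [Module R V] {S : Finset V} (hS : LinearIndepOn R id (S : Set V)) (hne : S.Nonempty) :
    ∑ s ∈ S, s ≠ 0 := by
  intro h0
  obtain ⟨a, ha⟩ := hne
  exact one_ne_zero <| linearIndepOn_finset_iff.mp hS (fun _ => (1 : R)) (by simpa using h0) a ha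

namespace IsSubsetSumCover

variable {R V : Type*} [AddCommGroup V] {k : ℕ} {S : Finset V}

theorem span_eq_top [Semiring R] [Module R V] (hS : IsSubsetSumCover k S) :
    Submodule.span R (S : Set V) = ⊤ := by
  refine Submodule.eq_top_iff'.mpr fun v => ?_
  obtain rfl | hv := eq_or_ne v 0
  · exact Submodule.zero_mem _
  obtain ⟨S', hS'S, -, -, rfl⟩ := hS v hv
  exact Submodule.sum_mem _ fun s hs => Submodule.subset_span (hS'S hs)

/-- If `S` had only `finrank R V` elements it would be a basis, and then the sum of all of `S`
has no other representation as a subset sum than `S` itself. -/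
theorem finrank_lt_card [CommRing R] [Nontrivial R] [Module R V] (hS : IsSubsetSumCover k S)
    (hk : k < finrank R V) : finrank R V < S.card := by
  classical
  have hspan := hS.span_eq_top (R := R)
  have hle : finrank R V ≤ S.card := by
    have := finrank_span_finset_le_card (R := R) S
    rwa [Set.finrank, hspan, finrank_top] at this
  refine hle.lt_of_ne fun hcard => ?_
  have hli : LinearIndepOn R id (S : Set V) :=
    linearIndependent_of_top_le_span_of_card_eq_finrank (by simpa using hspan.ge)
      (by simpa using hcard.symm)
  obtain ⟨S', hS'S, -, hS'k, hsum⟩ :=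
    hS _ (hli.sum_id_ne_zero (card_pos.mp (by omega)))
  have hsdiff : S \ S' = ∅ := by
    by_contra hne
    refine (hli.mono (coe_subset.mpr sdiff_subset)).sum_id_ne_zero
      (nonempty_iff_ne_empty.mpr hne) ?_
    rw [sum_sdiff_eq_sub hS'S, hsum, sub_self]
  have := card_le_card (sdiff_eq_empty_iff_subset.mp hsdiff)
  omega

end IsSubsetSumCover

theorem single_one_injective {ι : Type*} [DecidableEq ι] :
    Function.Injective fun i : ι => Pi.single i (1 : ZMod 2) := by
  intro i j h
  by_contra hij
  simpa [hij] using congrFun h i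

section StandardBasisWithOne

variable {ι : Type*} [Fintype ι] [DecidableEq ι]

theorem one_notMem_image_single [Nontrivial ι] (A : Finset ι) :
    (1 : ι → ZMod 2) ∉ A.image fun i => Pi.single i 1 := by
  simp only [mem_image, not_exists, not_and]
  intro i _ hi
  obtain ⟨j, hj⟩ := exists_ne i
  simpa [hj] using congrFun hi j

theorem sum_single_one_filter_ne_zero (v : ι → ZMod 2) :
    ∑ i ∈ univ.filter (v · ≠ 0), Pi.single i (1 : ZMod 2) = v := by
  ext j
  have key : ∀ x : ZMod 2, (if x ≠ 0 then 1 else 0) = x := by decide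
  simpa [Finset.sum_apply] using key (v j)

theorem one_add_sum_single_one_filter_eq_zero (v : ι → ZMod 2) :
    1 + ∑ i ∈ univ.filter (v · = 0), Pi.single i (1 : ZMod 2) = v := by
  ext j
  have key : ∀ x : ZMod 2, 1 + (if x = 0 then 1 else 0) = x := by decide
  simpa [Finset.sum_apply] using key (v j)

variable (ι) in
def standardBasisWithOne : Finset (ι → ZMod 2) :=
  insert 1 (univ.image fun i => Pi.single i 1)

theorem card_standardBasisWithOne [Nontrivial ι] :
    (standardBasisWithOne ι).card = Fintype.card ι + 1 := by
  rw [standardBasisWithOne, card_insert_of_notMem (one_notMem_image_single _),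
    card_image_of_injective _ single_one_injective, card_univ]

/-- A vector with more than `k` nonzero coordinates is `1` plus the sum of the basis vectors
at its at most `k - 1` zero coordinates. -/
theorem isSubsetSumCover_standardBasisWithOne [Nontrivial ι] {k : ℕ}
    (hk : Fintype.card ι ≤ 2 * k) : IsSubsetSumCover k (standardBasisWithOne ι) := by
  intro v hv
  set A := univ.filter (v · ≠ 0)
  set B := univ.filter (v · = 0)
  have hcard : A.card + B.card = Fintype.card ι := by
    simpa [A, B, add_comm] using card_filter_add_card_filter_not (s := univ) (v · = 0)
  by_cases hA : A.card ≤ k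
  · refine ⟨A.image _, (image_subset_image (subset_univ A)).trans (subset_insert _ _), ?_,
      card_image_le.trans hA, ?_⟩
    · simpa [A, filter_nonempty_iff, Function.ne_iff] using hv
    · rw [sum_image single_one_injective.injOn, sum_single_one_filter_ne_zero]
  · refine ⟨insert 1 (B.image _), insert_subset_insert _ (image_subset_image (subset_univ B)),
      insert_nonempty _ _, (card_insert_le _ _).trans ?_, ?_⟩
    · have := card_image_le (s := B) (f := fun i => Pi.single i (1 : ZMod 2))
      omega
    · rw [sum_insert (one_notMem_image_single _), sum_image single_one_injective.injOn,
        one_add_sum_single_one_filter_eq_zero]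

end StandardBasisWithOne

/-- For `T ≥ 2` and `⌈T/2⌉ ≤ k < T`, the minimum cardinality of a finite set
`S ⊆ F_2^T` such that every nonzero `v ∈ F_2^T` is a sum of at most `k` elements
of `S` equals exactly `T + 1`. -/
theorem stmt9 (T k : ℕ) (hT : 2 ≤ T) (hk1 : (T + 1) / 2 ≤ k) (hkT : k < T) :
    IsLeast {c : ℕ | ∃ S : Finset (Fin T → ZMod 2), S.card = c ∧
      ∀ v : Fin T → ZMod 2, v ≠ 0 →
        ∃ S' ⊆ S, S'.Nonempty ∧ S'.card ≤ k ∧ v = ∑ s ∈ S', s} (T + 1) := by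
  have : Nontrivial (Fin T) := Fin.nontrivial_iff_two_le.mpr hT
  refine ⟨⟨standardBasisWithOne (Fin T), by rw [card_standardBasisWithOne, Fintype.card_fin],
    isSubsetSumCover_standardBasisWithOne (by rw [Fintype.card_fin]; omega)⟩, ?_⟩
  rintro c ⟨S, rfl, hS⟩
  simpa using IsSubsetSumCover.finrank_lt_card (R := ZMod 2) hS (by simpa using hkT)
end

section
/- Let n, k, t be natural numbers with 1 ≤ k, 2k ≤ t + 1, and n ≤ ∑_{i=1}^{k} C(t, i). Then, as real numbers, t ≥ (k^{(k−1)/k} / e) · n^{1/k}, where e = exp(1) and C(·,·) denotes the binomial coefficient. -/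
/-!
Since `k ≤ (t + 1) / 2`, the binomial coefficients `C(t, i)` increase for `i ≤ k`, so
`n ≤ k · C(t, k)`. Combining `C(t, k) ≤ t^k / k!` with `k^k / k! ≤ e^k` gives
`k^(k-1) · n ≤ k^k · C(t, k) ≤ (e t)^k`, and taking `k`-th roots is the claim.
-/

open Finset Real

namespace Nat

theorem choose_le_choose_succ_of_two_mul_le {t m : ℕ} (h : 2 * (m + 1) ≤ t + 1) :
    t.choose m ≤ t.choose (m + 1) := by
  refine Nat.le_of_mul_le_mul_right ?_ m.succ_pos
  rw [choose_succ_right_eq]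
  exact Nat.mul_le_mul_left _ (by omega)

theorem choose_le_choose_of_le_of_two_mul_le {t i j : ℕ} (hij : i ≤ j) (hj : 2 * j ≤ t + 1) :
    t.choose i ≤ t.choose j := by
  induction j, hij using Nat.le_induction with
  | base => rfl
  | succ m _ ih => exact (ih (by omega)).trans (choose_le_choose_succ_of_two_mul_le hj)

theorem sum_Icc_choose_le_mul_choose {t k : ℕ} (hkt : 2 * k ≤ t + 1) :
    ∑ i ∈ Icc 1 k, t.choose i ≤ k * t.choose k := by
  simpa using Finset.sum_le_card_nsmul (Icc 1 k) (t.choose ·) (t.choose k)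
    fun i hi => choose_le_choose_of_le_of_two_mul_le (mem_Icc.mp hi).2 hkt

theorem pow_mul_choose_le_exp_mul_pow (t k : ℕ) :
    (k : ℝ) ^ k * t.choose k ≤ (exp 1 * t) ^ k := by
  calc (k : ℝ) ^ k * t.choose k ≤ (k : ℝ) ^ k * ((t : ℝ) ^ k / k !) := by
        gcongr; exact choose_le_pow_div k t
    _ = (k : ℝ) ^ k / k ! * (t : ℝ) ^ k := by ring
    _ ≤ exp k * (t : ℝ) ^ k := by gcongr; exact pow_div_factorial_le_exp _ k.cast_nonneg k
    _ = (exp 1 * t) ^ k := by rw [mul_pow, ← exp_nat_mul, mul_one]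

end Nat

theorem Real.natCast_rpow_sub_one_div_mul_rpow_inv_le {k : ℕ} (hk : 1 ≤ k) {x y : ℝ}
    (hx : 0 ≤ x) (hy : 0 ≤ y) (h : (k : ℝ) ^ (k - 1) * x ≤ y ^ k) :
    (k : ℝ) ^ (((k : ℝ) - 1) / k) * x ^ (1 / (k : ℝ)) ≤ y := by
  have hk0 : (0 : ℝ) < k := mod_cast hk
  rw [div_eq_mul_one_div, ← Nat.cast_pred hk, rpow_natCast_mul k.cast_nonneg,
    ← mul_rpow (by positivity) hx, one_div, rpow_inv_le_iff_of_pos (by positivity) hy hk0,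
    rpow_natCast]
  exact h

/-- If `1 ≤ k`, `2k ≤ t + 1` and `n ≤ ∑_{i=1}^{k} C(t, i)`, then, over the reals,
`t ≥ (k^{(k−1)/k} / e) · n^{1/k}`. -/
theorem stmt10 (n k t : ℕ) (hk : 1 ≤ k) (hkt : 2 * k ≤ t + 1)
    (hn : n ≤ ∑ i ∈ Finset.Icc 1 k, Nat.choose t i) :
    (t : ℝ) ≥ ((k : ℝ) ^ (((k : ℝ) - 1) / (k : ℝ)) / Real.exp 1) *
      (n : ℝ) ^ (1 / (k : ℝ)) := by
  have hn_le : (n : ℝ) ≤ k * t.choose k := mod_cast hn.trans (Nat.sum_Icc_choose_le_mul_choose hkt)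
  have key : (k : ℝ) ^ (k - 1) * n ≤ (exp 1 * t) ^ k :=
    calc (k : ℝ) ^ (k - 1) * n ≤ (k : ℝ) ^ (k - 1) * (k * t.choose k) := by gcongr
      _ = (k : ℝ) ^ k * t.choose k := by rw [← mul_assoc, ← pow_succ, Nat.sub_add_cancel hk]
      _ ≤ (exp 1 * t) ^ k := Nat.pow_mul_choose_le_exp_mul_pow t k
  have hroot := natCast_rpow_sub_one_div_mul_rpow_inv_le hk n.cast_nonneg (by positivity) key
  rw [ge_iff_le, div_mul_eq_mul_div, div_le_iff₀ (exp_pos 1), mul_comm (t : ℝ)]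
  exact hroot
end

section
/- Let g_1, …, g_T be linearly independent vectors in F_2^m, and let h_1, …, h_r be vectors of the form h_j = ∑_{i ∈ I_j} g_i for subsets I_j ⊆ {1, …, T}. For i ∈ {1,…,T} define the outbound set O_i = { j : i ∈ I_j }. Suppose there is a permutation i_1, …, i_T of {1, …, T} such that O_{i_T} ⊆ O_{i_{T−1}} ⊆ ⋯ ⊆ O_{i_1}. Then there exist T vectors a_1, …, a_T ∈ F_2^m such that each of the vectors g_1, …, g_T, h_1, …, h_r is a sum of at most 2 of the vectors a_1, …, a_T. -/
/-!
Order the `g_i` along `σ` and take the prefix sums `a_t = g_{σ 0} + ⋯ + g_{σ t}`. Each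
`g_{σ t}` is `a_t` or `a_{t-1} + a_t` (over `F_2`, subtracting is adding). The chain condition
on the outbound sets says exactly that every `σ⁻¹(I_j)` is an initial segment, so `h_j` is `0`
or a single prefix sum.
-/

open Finset

def IsSumOfAtMostTwo {ι M : Type*} [Add M] [Zero M] (a : ι → M) (v : M) : Prop :=
  (∃ t, v = a t) ∨ (∃ s t, s ≠ t ∧ v = a s + a t) ∨ v = 0

section PrefixSum

variable {α M : Type*} [LinearOrder α] [LocallyFiniteOrderBot α]

theorem Finset.eq_empty_or_exists_eq_Iic_of_isLowerSet {S : Finset α}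
    (hS : IsLowerSet (S : Set α)) : S = ∅ ∨ ∃ t ∈ S, S = Iic t := by
  rcases S.eq_empty_or_nonempty with hempty | hne
  · exact Or.inl hempty
  · refine Or.inr ⟨S.max' hne, S.max'_mem hne, ?_⟩
    ext t
    exact ⟨fun ht => mem_Iic.2 (S.le_max' t ht),
      fun ht => hS (mem_Iic.1 ht) (S.max'_mem hne)⟩

def prefixSum [AddCommMonoid M] (v : α → M) (t : α) : M :=
  ∑ s ∈ Iic t, v s

theorem isSumOfAtMostTwo_sum_of_isLowerSet [AddCommMonoid M] (v : α → M) {S : Finset α}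
    (hS : IsLowerSet (S : Set α)) : IsSumOfAtMostTwo (prefixSum v) (∑ s ∈ S, v s) := by
  rcases S.eq_empty_or_exists_eq_Iic_of_isLowerSet hS with rfl | ⟨t, -, rfl⟩
  · exact Or.inr (Or.inr sum_empty)
  · exact Or.inl ⟨t, rfl⟩

theorem isSumOfAtMostTwo_self_of_zmod_two [AddCommGroup M] [Module (ZMod 2) M] (v : α → M)
    (t : α) : IsSumOfAtMostTwo (prefixSum v) (v t) := by
  have hsplit : prefixSum v t = ∑ s ∈ Iio t, v s + v t := by
    rw [prefixSum, Iic_eq_cons_Iio, sum_cons, add_comm]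
  have hlower : IsLowerSet (Iio t : Set α) := by
    rw [coe_Iio]
    exact isLowerSet_Iio t
  rcases (Iio t).eq_empty_or_exists_eq_Iic_of_isLowerSet hlower with hempty | ⟨s, hs, hIio⟩
  · refine Or.inl ⟨t, ?_⟩
    rw [hsplit, hempty, sum_empty, zero_add]
  · refine Or.inr (Or.inl ⟨s, t, (mem_Iio.1 hs).ne, ?_⟩)
    rw [hsplit, hIio, ← prefixSum, ← add_assoc, ZModModule.add_self, zero_add]

end PrefixSum

theorem stmt12_general (m T r : ℕ) (g : Fin T → (Fin m → ZMod 2))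
    (I : Fin r → Finset (Fin T)) (h : Fin r → (Fin m → ZMod 2))
    (hh : ∀ j, h j = ∑ i ∈ I j, g i)
    (σ : Equiv.Perm (Fin T))
    (hσ : ∀ s t : Fin T, s ≤ t → {j | σ t ∈ I j} ⊆ {j | σ s ∈ I j}) :
    ∃ a : Fin T → (Fin m → ZMod 2),
      (∀ i, (∃ t, g i = a t) ∨ (∃ s t, s ≠ t ∧ g i = a s + a t) ∨ g i = 0) ∧
      (∀ j, (∃ t, h j = a t) ∨ (∃ s t, s ≠ t ∧ h j = a s + a t) ∨ h j = 0) := by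
  refine ⟨prefixSum (g ∘ σ), fun i => (?_ : IsSumOfAtMostTwo _ (g i)),
    fun j => (?_ : IsSumOfAtMostTwo _ (h j))⟩
  · simpa only [Function.comp_apply, Equiv.apply_symm_apply] using
      isSumOfAtMostTwo_self_of_zmod_two (g ∘ σ) (σ.symm i)
  · set S : Finset (Fin T) := (I j).map σ.symm.toEmbedding with hS
    have hlower : IsLowerSet (S : Set (Fin T)) := by
      intro t s hst ht
      simp only [hS, mem_coe, mem_map_equiv, Equiv.symm_symm] at ht ⊢
      exact hσ s t hst ht
    have hsum : h j = ∑ t ∈ S, (g ∘ σ) t := by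
      simp [hS, hh j]
    rw [hsum]
    exact isSumOfAtMostTwo_sum_of_isLowerSet (g ∘ σ) hlower

/-- Let `g_1, …, g_T` be linearly independent vectors in `F_2^m` and let
`h_j = ∑_{i ∈ I_j} g_i`. If there is a permutation `σ` of `{1,…,T}` such that the
outbound sets `O_{σ(t)} = {j : σ(t) ∈ I_j}` form a decreasing chain
(`O_{σ(t)} ⊆ O_{σ(s)}` whenever `s ≤ t`), then there exist `T` vectors
`a_1, …, a_T` such that each `g_i` and each `h_j` is a sum of at most `2` of them. -/
theorem stmt12 (m T r : ℕ) (g : Fin T → (Fin m → ZMod 2))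
    (hg : LinearIndependent (ZMod 2) g)
    (I : Fin r → Finset (Fin T)) (h : Fin r → (Fin m → ZMod 2))
    (hh : ∀ j, h j = ∑ i ∈ I j, g i)
    (σ : Equiv.Perm (Fin T))
    (hσ : ∀ s t : Fin T, s ≤ t → {j | σ t ∈ I j} ⊆ {j | σ s ∈ I j}) :
    ∃ a : Fin T → (Fin m → ZMod 2),
      (∀ i, (∃ t, g i = a t) ∨ (∃ s t, s ≠ t ∧ g i = a s + a t) ∨ g i = 0) ∧
      (∀ j, (∃ t, h j = a t) ∨ (∃ s t, s ≠ t ∧ h j = a s + a t) ∨ h j = 0) :=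
  stmt12_general m T r g I h hh σ hσ
end

section
/- Let g_1, …, g_{T+1} be T + 1 vectors in F_2^m whose span has dimension T. Then there exist T vectors a_1, …, a_T ∈ F_2^m such that each g_i, i ∈ {1, …, T+1}, is a sum of at most 2 of the vectors a_1, …, a_T. -/
/-!
The family `g` is linearly dependent, so some `g i₀` is the sum `∑ t ∈ S, b t` of a subset
of the other `T` vectors `b`. Listing `S = {s₁, …, sₖ}`, replace each `b sⱼ` by the partial sum
`b s₁ + ⋯ + b sⱼ` and keep the other `b t`: then `b sⱼ` is the difference of two consecutive
partial sums (a sum, in characteristic `2`) and `g i₀` is the last partial sum.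
-/

open Finset Submodule

theorem Finset.exists_eq_or_eq_sub_and_sum_eq {ι G : Type*} [DecidableEq ι] [AddCommGroup G]
    (b : ι → G) (S : Finset ι) :
    ∃ a : ι → G, (∀ t, b t = a t ∨ ∃ s ∈ S, s ≠ t ∧ b t = a t - a s) ∧
      (S.Nonempty → ∃ j ∈ S, ∑ s ∈ S, b s = a j) := by
  induction S using Finset.induction_on with
  | empty => exact ⟨b, fun t => Or.inl rfl, fun h => absurd h not_nonempty_empty⟩
  | insert x S hx ih =>
    obtain ⟨a, ha, hsum⟩ := ih
    refine ⟨Function.update a x (∑ s ∈ insert x S, b s), fun t => ?_,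
      fun _ => ⟨x, mem_insert_self x S, by simp⟩⟩
    by_cases htx : t = x
    · subst htx
      rcases S.eq_empty_or_nonempty with rfl | hS
      · simp
      · obtain ⟨j, hj, hj_sum⟩ := hsum hS
        have hjt : j ≠ t := ne_of_mem_of_not_mem hj hx
        refine Or.inr ⟨j, mem_insert_of_mem hj, hjt, ?_⟩
        simp [sum_insert hx, hj_sum, Function.update_of_ne hjt]
    · rcases ha t with h | ⟨s, hs, hst, h⟩
      · simp [Function.update_of_ne htx, h]
      · refine Or.inr ⟨s, mem_insert_of_mem hs, hst, ?_⟩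
        rw [Function.update_of_ne htx, Function.update_of_ne (ne_of_mem_of_not_mem hs hx), h]

theorem exists_finset_sum_eq_of_mem_span_range {ι V : Type*} [Fintype ι] [AddCommGroup V]
    [Module (ZMod 2) V] {b : ι → V} {v : V} (hv : v ∈ span (ZMod 2) (Set.range b)) :
    ∃ S : Finset ι, ∑ t ∈ S, b t = v := by
  classical
  obtain ⟨c, rfl⟩ := (mem_span_range_iff_exists_fun (ZMod 2)).1 hv
  refine ⟨univ.filter (c · = 1), ?_⟩
  rw [sum_filter]
  refine sum_congr rfl fun t _ => ?_
  have h01 : ∀ y : ZMod 2, y = 0 ∨ y = 1 := by decide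
  rcases h01 (c t) with h | h <;> simp [h]

theorem exists_mem_span_range_succAbove_of_not_linearIndependent {K V : Type*} [DivisionRing K]
    [AddCommGroup V] [Module K V] {n : ℕ} {g : Fin (n + 1) → V}
    (hg : ¬LinearIndependent K g) : ∃ i, g i ∈ span K (Set.range (g ∘ i.succAbove)) := by
  contrapose! hg
  refine linearIndependent_iff_notMem_span.2 fun i => ?_
  simpa [Set.range_comp, Fin.range_succAbove, Set.compl_eq_univ_sdiff] using hg i

/-- If `g_1, …, g_{T+1}` are `T + 1` vectors in `F_2^m` whose span has dimension
`T`, then there exist `T` vectors `a_1, …, a_T ∈ F_2^m` such that each `g_i` is a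
sum of at most `2` of the vectors `a_1, …, a_T`. -/
theorem stmt13 (m T : ℕ) (g : Fin (T + 1) → (Fin m → ZMod 2))
    (hT : Module.finrank (ZMod 2) (Submodule.span (ZMod 2) (Set.range g)) = T) :
    ∃ a : Fin T → (Fin m → ZMod 2),
      ∀ i, (∃ t, g i = a t) ∨ (∃ s t, s ≠ t ∧ g i = a s + a t) ∨ g i = 0 := by
  have hdep : ¬LinearIndependent (ZMod 2) g := fun hli => by
    simp [finrank_span_eq_card hli] at hT
  obtain ⟨i₀, hi₀⟩ := exists_mem_span_range_succAbove_of_not_linearIndependent hdep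
  obtain ⟨S, hS⟩ := exists_finset_sum_eq_of_mem_span_range hi₀
  obtain ⟨a, hb, hsum⟩ := S.exists_eq_or_eq_sub_and_sum_eq (g ∘ i₀.succAbove)
  refine ⟨a, fun i => ?_⟩
  rcases Fin.eq_self_or_eq_succAbove i₀ i with rfl | ⟨t, rfl⟩
  · rcases S.eq_empty_or_nonempty with rfl | hne
    · exact Or.inr (Or.inr (by simpa using hS.symm))
    · obtain ⟨j, -, hj⟩ := hsum hne
      exact Or.inl ⟨j, hS ▸ hj⟩
  · rcases hb t with h | ⟨s, -, hst, h⟩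
    · exact Or.inl ⟨t, h⟩
    · refine Or.inr (Or.inl ⟨s, t, hst, ?_⟩)
      rw [← Function.comp_apply (f := g), h, ZModModule.sub_eq_add, add_comm]
end
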